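/- Let M be a module over ℤ equipped with an alternating ℤ-bilinear form ω, let ε ∈ {1, −1}, and for x ∈ M let T_x : M → M denote the map T_x(y) = y − ω(y,x)·x. If a, b, c, w ∈ M satisfy ω(a,b) = ω(b,c) = ω(c,a) = ε and ω(a,w) = 0, then ω(c + a, T_{T_a(b)}(w)) = ω(b + c, w). -/
import Mathlib


/-- If `ω a b = ω b c = ω c a = ε` with `ε = ±1` and `ω a w = 0`, then
`ω (c + a) (T (T a b) w) = ω (b + c) w`: the invariant `I(V)` is unchanged by a
`Δ₁`-move. -/
theorem stmt7 (M : Type*) [AddCommGroup M] [Module ℤ M]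
    (ω : M →ₗ[ℤ] M →ₗ[ℤ] ℤ) (halt : ∀ x : M, ω x x = 0)
    (ε : ℤ) (hε : ε = 1 ∨ ε = -1)
    (T : M → M → M) (hT : ∀ x y : M, T x y = y - ω y x • x)
    (a b c w : M) (hab : ω a b = ε) (hbc : ω b c = ε) (hca : ω c a = ε)
    (haw : ω a w = 0) :
    ω (c + a) (T (T a b) w) = ω (b + c) w := by
  have skew : ∀ x y : M, ω x y = -ω y x := by
    intro x y
    have h := halt (x + y)
    simp [map_add, halt x, halt y] at h
    linarith
  have hε2 : ε * ε = 1 := by rcases hε with h | h <;> simp [h]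
  simp only [hT, map_sub, map_add, map_smul, smul_eq_mul, smul_sub, smul_smul]
  have hba : ω b a = -ε := by rw [skew, hab]
  have hcb : ω c b = -ε := by rw [skew, hbc]
  have hac : ω a c = -ε := by rw [skew, hca]
  have hwa : ω w a = 0 := by rw [skew, haw]; ring
  simp [halt, hab, hbc, hca, hba, hcb, hac, haw, hwa, skew w b, skew w c]
  have h2 : ε ^ 2 = 1 := by rcases hε with h | h <;> simp [h]
  ring_nf
  rw [h2]; ring
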